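/- arXiv:1711.00516 — 5 statements merged into one kernel-verified Lean document; each statement's English description precedes it below -/
import Mathlib

section
/- Let λ, τ ∈ ℝ and u, v ∈ 𝓢(ℝ;ℂ), and set w := (u+v)/2. Suppose that for every x ∈ ℝ, v(x) = u(x) + iτ·w''(x) + iλτ·((|u(x)|² + |v(x)|²)/2)·w(x). Then ∫_ℝ |v(x)|² dx = ∫_ℝ |u(x)|² dx. -/
/-!
Pair the step with the midpoint `w = (u + v) / 2`. Pointwise,
`|v|² - |u|² = Re (conj (u + v) (v - u)) = 2 Re (conj w (v - u))`, and `v - u = iτ w'' + i c w`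
with `c` real, so the nonlinear term only contributes the purely imaginary `i c |w|²` and
`|v|² - |u|² = -2τ Im (conj w w'')`. Integrating by parts, `∫ conj w w'' = -∫ |w'|²` is real,
so the correction term integrates to zero.
-/

open MeasureTheory Complex

open scoped ComplexConjugate SchwartzMap

theorem Complex.sq_norm_sub_sq_norm (a b : ℂ) :
    ‖b‖ ^ 2 - ‖a‖ ^ 2 = (conj (a + b) * (b - a)).re := by
  simp only [Complex.sq_norm, normSq_apply, mul_re, conj_re, conj_im, add_re, add_im, sub_re,
    sub_im]
  ring

theorem Complex.sq_norm_of_crankNicolson_step {a b z : ℂ} {t c : ℝ}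
    (h : b = a + I * t * z + I * c * ((a + b) / 2)) :
    ‖b‖ ^ 2 = ‖a‖ ^ 2 - 2 * t * (conj ((a + b) / 2) * z).im := by
  have hdiff := sq_norm_sub_sq_norm a b
  rw [show b - a = I * t * z + I * c * ((a + b) / 2) by linear_combination h] at hdiff
  have hre : (conj (a + b) * (I * t * z + I * c * ((a + b) / 2))).re
      = -2 * t * (conj ((a + b) / 2) * z).im := by
    simp [mul_re, mul_im, div_re, div_im, normSq_apply]
    ring
  linarith

noncomputable def Complex.conjMulCLM : ℂ →L[ℝ] ℂ →L[ℝ] ℂ :=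
  (ContinuousLinearMap.mul ℝ ℂ).comp conjCLE.toContinuousLinearMap

@[simp]
theorem Complex.conjMulCLM_apply (a b : ℂ) : conjMulCLM a b = conj a * b := rfl

namespace SchwartzMap

theorem integrable_conj_mul (f g : 𝓢(ℝ, ℂ)) : Integrable fun x ↦ conj (f x) * g x :=
  (pairing conjMulCLM f g).integrable

theorem integral_conj_mul_deriv_deriv (f : 𝓢(ℝ, ℂ)) :
    ∫ x, conj (f x) * deriv (deriv f) x = -((∫ x, ‖deriv f x‖ ^ 2 : ℝ) : ℂ) := by
  have hparts : ∫ x, conj (f x) * deriv (deriv f) x = -∫ x, conj (deriv f x) * deriv f x :=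
    integral_bilinear_deriv_right_eq_neg_left f (derivCLM ℝ ℂ f) conjMulCLM
  simp_rw [hparts, conj_mul', ← ofReal_pow, integral_complex_ofReal]

theorem integral_im_conj_mul_deriv_deriv (f : 𝓢(ℝ, ℂ)) :
    ∫ x, (conj (f x) * deriv (deriv f) x).im = 0 := by
  calc _ = (∫ x, conj (f x) * deriv (deriv f) x).im :=
        integral_im (f.integrable_conj_mul (derivCLM ℝ ℂ (derivCLM ℝ ℂ f)))
    _ = 0 := by rw [integral_conj_mul_deriv_deriv, neg_im, ofReal_im, neg_zero]

end SchwartzMap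

/-- Charge conservation of one step of the Crank–Nicolson type scheme:
if `v = u + iτ w'' + iλτ ((|u|²+|v|²)/2) w` pointwise, with `w = (u+v)/2`, then
`∫ |v|² = ∫ |u|²`. -/
theorem stmt1 (lam τ : ℝ) (u v : SchwartzMap ℝ ℂ)
    (hstep : ∀ x : ℝ,
      v x = u x + Complex.I * (τ : ℂ) *
          deriv (deriv (fun y : ℝ => (u y + v y) / 2)) x
        + Complex.I * (lam : ℂ) * (τ : ℂ) *
          (((‖u x‖ ^ 2 + ‖v x‖ ^ 2 : ℝ) : ℂ) / 2) * ((u x + v x) / 2)) :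
    ∫ x : ℝ, ‖v x‖ ^ 2 = ∫ x : ℝ, ‖u x‖ ^ 2 := by
  set w : 𝓢(ℝ, ℂ) := (2 : ℂ)⁻¹ • (u + v)
  have hw : (fun y ↦ (u y + v y) / 2) = ⇑w := by
    ext y
    simp [w]
    ring
  have hpt (x : ℝ) : ‖v x‖ ^ 2 = ‖u x‖ ^ 2 - 2 * τ * (conj (w x) * deriv (deriv w) x).im := by
    have h := hstep x
    rw [hw] at h
    rw [← congrFun hw x]
    exact sq_norm_of_crankNicolson_step (c := lam * τ * ((‖u x‖ ^ 2 + ‖v x‖ ^ 2) / 2))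
      (by push_cast at h ⊢; linear_combination h)
  have hu : Integrable fun x ↦ ‖u x‖ ^ 2 := (u.memLp 2).integrable_norm_pow two_ne_zero
  have him : Integrable fun x ↦ (conj (w x) * deriv (deriv w) x).im :=
    (w.integrable_conj_mul (SchwartzMap.derivCLM ℝ ℂ (SchwartzMap.derivCLM ℝ ℂ w))).im
  calc ∫ x, ‖v x‖ ^ 2 = ∫ x, ‖u x‖ ^ 2 - 2 * τ * (conj (w x) * deriv (deriv w) x).im :=
        integral_congr_ae (.of_forall hpt)
    _ = ∫ x, ‖u x‖ ^ 2 := by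
        rw [integral_sub hu (him.const_mul _), integral_const_mul,
          w.integral_im_conj_mul_deriv_deriv, mul_zero, sub_zero]
end

section
/- For every u ∈ 𝓢(ℝ;ℂ): ∫_ℝ |u(x)|⁴ dx ≤ 2·(∫_ℝ |u'(x)|² dx)^{1/2} · (∫_ℝ |u(x)|² dx)^{3/2}. -/
/-!
Writing `‖u a‖² = ∫_{-∞}^a 2 ⟪u, u'⟫` and applying Cauchy–Schwarz gives the pointwise bound
`‖u a‖² ≤ 2 ‖u'‖₂ ‖u‖₂`. Then `∫ ‖u‖⁴ ≤ sup ‖u‖² · ∫ ‖u‖² ≤ 2 ‖u'‖₂ ‖u‖₂³`.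
-/

open MeasureTheory Filter Topology Set

theorem integral_norm_mul_norm_le_of_memLp_two {α E G : Type*} [MeasurableSpace α] {μ : Measure α}
    [NormedAddCommGroup E] [NormedAddCommGroup G] {f : α → E} {g : α → G}
    (hf : MemLp f 2 μ) (hg : MemLp g 2 μ) :
    ∫ x, ‖f x‖ * ‖g x‖ ∂μ ≤
      (∫ x, ‖f x‖ ^ 2 ∂μ) ^ ((1 : ℝ) / 2) * (∫ x, ‖g x‖ ^ 2 ∂μ) ^ ((1 : ℝ) / 2) := by
  have h2 : ENNReal.ofReal 2 = 2 := ENNReal.ofReal_ofNat 2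
  have := integral_mul_norm_le_Lp_mul_Lq Real.HolderConjugate.two_two (h2 ▸ hf.norm) (h2 ▸ hg.norm)
  simpa only [norm_norm, Real.rpow_two] using this

variable {F : Type*} [NormedAddCommGroup F] [InnerProductSpace ℝ F] {f f' : ℝ → F}

theorem sq_norm_le_two_mul_integral_norm_mul_norm (hf : ∀ x, HasDerivAt f (f' x) x)
    (hf' : AEStronglyMeasurable f') (hint : Integrable fun x ↦ ‖f x‖ * ‖f' x‖)
    (hlim : Tendsto f atBot (𝓝 0)) (a : ℝ) :
    ‖f a‖ ^ 2 ≤ 2 * ∫ x, ‖f x‖ * ‖f' x‖ := by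
  have hbound : ∀ x, 2 * inner ℝ (f x) (f' x) ≤ 2 * (‖f x‖ * ‖f' x‖) := fun x ↦ by
    linarith [(abs_le.1 (abs_real_inner_le_norm (f x) (f' x))).2]
  have hint' : Integrable fun x ↦ 2 * (‖f x‖ * ‖f' x‖) := hint.const_mul 2
  have hderiv_int : Integrable fun x ↦ 2 * inner ℝ (f x) (f' x) := by
    refine hint'.mono' ?_ (Eventually.of_forall fun x ↦ ?_)
    · have hfc : Continuous f := continuous_iff_continuousAt.2 fun x ↦ (hf x).continuousAt
      exact (hfc.aestronglyMeasurable.inner hf').const_mul 2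
    · rw [Real.norm_eq_abs, abs_mul, abs_two]
      gcongr
      exact abs_real_inner_le_norm _ _
  have hftc := integral_Iic_of_hasDerivAt_of_tendsto' (a := a) (fun x _ ↦ (hf x).norm_sq)
    hderiv_int.integrableOn (by simpa using hlim.norm.pow 2)
  calc ‖f a‖ ^ 2 = ∫ x in Iic a, 2 * inner ℝ (f x) (f' x) := by rw [hftc, sub_zero]
    _ ≤ ∫ x in Iic a, 2 * (‖f x‖ * ‖f' x‖) :=
      setIntegral_mono hderiv_int.integrableOn hint'.integrableOn hbound
    _ ≤ ∫ x, 2 * (‖f x‖ * ‖f' x‖) :=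
      setIntegral_le_integral hint' (Eventually.of_forall fun x ↦ by positivity)
    _ = 2 * ∫ x, ‖f x‖ * ‖f' x‖ := integral_const_mul _ _

theorem sq_norm_le_of_memLp_two (hf : ∀ x, HasDerivAt f (f' x) x) (hlim : Tendsto f atBot (𝓝 0))
    (hfL2 : MemLp f 2) (hf'L2 : MemLp f' 2) (a : ℝ) :
    ‖f a‖ ^ 2 ≤ 2 * (∫ x, ‖f' x‖ ^ 2) ^ ((1 : ℝ) / 2) * (∫ x, ‖f x‖ ^ 2) ^ ((1 : ℝ) / 2) := by
  have hint : Integrable fun x ↦ ‖f x‖ * ‖f' x‖ := hfL2.norm.integrable_mul hf'L2.norm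
  calc ‖f a‖ ^ 2 ≤ 2 * ∫ x, ‖f x‖ * ‖f' x‖ :=
        sq_norm_le_two_mul_integral_norm_mul_norm hf hf'L2.1 hint hlim a
    _ ≤ 2 * ((∫ x, ‖f x‖ ^ 2) ^ ((1 : ℝ) / 2) * (∫ x, ‖f' x‖ ^ 2) ^ ((1 : ℝ) / 2)) := by
        gcongr
        exact integral_norm_mul_norm_le_of_memLp_two hfL2 hf'L2
    _ = _ := by ring

theorem integral_norm_pow_four_le (hf : ∀ x, HasDerivAt f (f' x) x)
    (hlim : Tendsto f atBot (𝓝 0)) (hfL2 : MemLp f 2) (hf'L2 : MemLp f' 2) :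
    ∫ x, ‖f x‖ ^ 4 ≤
      2 * (∫ x, ‖f' x‖ ^ 2) ^ ((1 : ℝ) / 2) * (∫ x, ‖f x‖ ^ 2) ^ ((3 : ℝ) / 2) := by
  set M := 2 * (∫ x, ‖f' x‖ ^ 2) ^ ((1 : ℝ) / 2) * (∫ x, ‖f x‖ ^ 2) ^ ((1 : ℝ) / 2)
  have hA : 0 ≤ ∫ x, ‖f x‖ ^ 2 := integral_nonneg fun x ↦ by positivity
  have hsq_int : Integrable fun x ↦ ‖f x‖ ^ 2 := (memLp_two_iff_integrable_sq_norm hfL2.1).1 hfL2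
  calc ∫ x, ‖f x‖ ^ 4 ≤ ∫ x, M * ‖f x‖ ^ 2 := by
        refine integral_mono_of_nonneg (Eventually.of_forall fun x ↦ by positivity)
          (hsq_int.const_mul M) (Eventually.of_forall fun x ↦ ?_)
        calc ‖f x‖ ^ 4 = ‖f x‖ ^ 2 * ‖f x‖ ^ 2 := by ring
          _ ≤ M * ‖f x‖ ^ 2 := by gcongr; exact sq_norm_le_of_memLp_two hf hlim hfL2 hf'L2 x
    _ = 2 * (∫ x, ‖f' x‖ ^ 2) ^ ((1 : ℝ) / 2) * (∫ x, ‖f x‖ ^ 2) ^ ((3 : ℝ) / 2) := by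
        rw [integral_const_mul, show (3 : ℝ) / 2 = 1 / 2 + 1 by norm_num,
          Real.rpow_add' hA (by norm_num), Real.rpow_one]
        ring

/-- The one-dimensional Gagliardo–Nirenberg inequality
`‖u‖_{L⁴}⁴ ≤ 2‖u'‖_{L²}·‖u‖_{L²}³` for Schwartz functions. -/
theorem stmt6 (u : SchwartzMap ℝ ℂ) :
    ∫ x : ℝ, ‖u x‖ ^ 4 ≤
      2 * (∫ x : ℝ, ‖deriv u x‖ ^ 2) ^ ((1 : ℝ) / 2)
        * (∫ x : ℝ, ‖u x‖ ^ 2) ^ ((3 : ℝ) / 2) := by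
  have hderiv : ⇑(SchwartzMap.derivCLM ℝ ℂ u) = deriv u :=
    funext (SchwartzMap.derivCLM_apply ℝ u)
  refine integral_norm_pow_four_le (fun x ↦ u.differentiableAt.hasDerivAt)
    ((zero_at_infty u).mono_left atBot_le_cocompact) (u.memLp 2) ?_
  exact hderiv ▸ (SchwartzMap.derivCLM ℝ ℂ u).memLp 2
end

section
/- For every u ∈ 𝓢(ℝ;ℂ) and every x ∈ ℝ: |u(x)|² ≤ 2·(∫_ℝ |u(y)|² dy)^{1/2} · (∫_ℝ |u'(y)|² dy)^{1/2}. In particular sup_x |u(x)|² ≤ 2‖u‖·‖u'‖. -/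
/-!
Writing `|u x|² = ∫_{-∞}^x (|u|²)' = ∫_{-∞}^x 2 Re ⟨u, u'⟩` (the boundary term at `-∞` vanishes),
the pointwise bound `|u x|² ≤ 2 ∫ |u| |u'|` follows, and Cauchy–Schwarz bounds the right-hand side
by `2 ‖u‖ ‖u'‖`.
-/

open MeasureTheory Filter Set
open scoped Topology

theorem integral_norm_mul_norm_le_L2_mul_L2 {α E : Type*} [MeasurableSpace α] {μ : Measure α}
    [NormedAddCommGroup E] {f g : α → E} (hf : MemLp f 2 μ) (hg : MemLp g 2 μ) :
    ∫ a, ‖f a‖ * ‖g a‖ ∂μ ≤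
      (∫ a, ‖f a‖ ^ 2 ∂μ) ^ ((1 : ℝ) / 2) * (∫ a, ‖g a‖ ^ 2 ∂μ) ^ ((1 : ℝ) / 2) := by
  have h2 : ENNReal.ofReal 2 = 2 := by norm_num
  simpa only [Real.rpow_two] using
    integral_mul_norm_le_Lp_mul_Lq Real.HolderConjugate.two_two (h2 ▸ hf) (h2 ▸ hg)

section Agmon

variable {E : Type*} [NormedAddCommGroup E] [InnerProductSpace ℝ E] {f : ℝ → E}

theorem abs_deriv_sq_norm_le (hf : Differentiable ℝ f) (y : ℝ) :
    |deriv (fun t => ‖f t‖ ^ 2) y| ≤ 2 * (‖f y‖ * ‖deriv f y‖) := by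
  rw [((hf y).hasDerivAt.norm_sq).deriv, abs_mul, abs_two]
  exact mul_le_mul_of_nonneg_left (abs_real_inner_le_norm _ _) zero_le_two

theorem sq_norm_le_two_mul_integral_norm_mul_norm_deriv (hf : Differentiable ℝ f)
    (hlim : Tendsto f atBot (𝓝 0)) (hint : Integrable (fun y => ‖f y‖ * ‖deriv f y‖))
    (x : ℝ) : ‖f x‖ ^ 2 ≤ 2 * ∫ y, ‖f y‖ * ‖deriv f y‖ := by
  set F : ℝ → ℝ := fun t => ‖f t‖ ^ 2
  have hF : Differentiable ℝ F := fun y => ((hf y).hasDerivAt.norm_sq).differentiableAt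
  have hF'int : Integrable (deriv F) :=
    (hint.const_mul 2).mono' (aestronglyMeasurable_deriv F volume)
      (ae_of_all _ fun y => (Real.norm_eq_abs _).trans_le (abs_deriv_sq_norm_le hf y))
  have hFTC : ∫ y in Iic x, deriv F y = F x - 0 :=
    integral_Iic_of_hasDerivAt_of_tendsto' (fun y _ => (hF y).hasDerivAt) hF'int.integrableOn
      (by simpa using hlim.norm.pow 2)
  calc ‖f x‖ ^ 2 = ∫ y in Iic x, deriv F y := by rw [hFTC, sub_zero]
    _ ≤ ∫ y in Iic x, 2 * (‖f y‖ * ‖deriv f y‖) :=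
        setIntegral_mono hF'int.integrableOn (hint.const_mul 2).integrableOn
          fun y => (le_abs_self _).trans (abs_deriv_sq_norm_le hf y)
    _ ≤ ∫ y, 2 * (‖f y‖ * ‖deriv f y‖) :=
        setIntegral_le_integral (hint.const_mul 2) (ae_of_all _ fun y => by positivity)
    _ = 2 * ∫ y, ‖f y‖ * ‖deriv f y‖ := integral_const_mul 2 _

theorem sq_norm_le_two_mul_L2_mul_L2_deriv (hf : Differentiable ℝ f)
    (hlim : Tendsto f atBot (𝓝 0)) (hf2 : MemLp f 2) (hf'2 : MemLp (deriv f) 2) (x : ℝ) :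
    ‖f x‖ ^ 2 ≤
      2 * (∫ y, ‖f y‖ ^ 2) ^ ((1 : ℝ) / 2) * (∫ y, ‖deriv f y‖ ^ 2) ^ ((1 : ℝ) / 2) := by
  rw [mul_assoc]
  calc ‖f x‖ ^ 2 ≤ 2 * ∫ y, ‖f y‖ * ‖deriv f y‖ :=
        sq_norm_le_two_mul_integral_norm_mul_norm_deriv hf hlim
          (hf2.norm.integrable_mul hf'2.norm) x
    _ ≤ _ := mul_le_mul_of_nonneg_left
        (integral_norm_mul_norm_le_L2_mul_L2 hf2 hf'2) zero_le_two

end Agmon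

/-- One-dimensional Agmon inequality: for every Schwartz `u` and `x`,
`|u(x)|² ≤ 2‖u‖_{L²}‖u'‖_{L²}`; in particular the same bound holds for `sup_x |u(x)|²`. -/
theorem stmt7 (u : SchwartzMap ℝ ℂ) :
    (∀ x : ℝ, ‖u x‖ ^ 2 ≤
        2 * (∫ y : ℝ, ‖u y‖ ^ 2) ^ ((1 : ℝ) / 2)
          * (∫ y : ℝ, ‖deriv u y‖ ^ 2) ^ ((1 : ℝ) / 2)) ∧
      (⨆ x : ℝ, ‖u x‖ ^ 2) ≤
        2 * (∫ y : ℝ, ‖u y‖ ^ 2) ^ ((1 : ℝ) / 2)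
          * (∫ y : ℝ, ‖deriv u y‖ ^ 2) ^ ((1 : ℝ) / 2) := by
  have hderiv : MemLp (deriv u) 2 :=
    ((SchwartzMap.derivCLM ℝ ℂ u).memLp 2).ae_eq (ae_of_all _ (SchwartzMap.derivCLM_apply ℝ u))
  have hpointwise := sq_norm_le_two_mul_L2_mul_L2_deriv
    u.differentiable ((u.tendsto_cocompact).mono_left atBot_le_cocompact) (u.memLp 2) hderiv
  exact ⟨hpointwise, ciSup_le hpointwise⟩
end

section
/- For every θ ∈ ℝ: |(1 − iθ/2)·e^{iθ} − (1 + iθ/2)| ≤ |θ|³/12, and consequently |e^{iθ} − (1 + iθ/2)/(1 − iθ/2)| ≤ |θ|³/12. -/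
/-! With `D θ = (1 - iθ/2) e^{iθ} - (1 + iθ/2)` one has `D 0 = D' 0 = 0` and `D'' θ = (iθ/2) e^{iθ}`,
so `‖D'' θ‖ = |θ|/2`; integrating this bound twice from `0` gives `‖D θ‖ ≤ |θ|³/12`, first for
`θ ≥ 0` and then for all `θ` since `D (-θ) = conj (D θ)`. Dividing by `1 - iθ/2`, whose real part
is `1`, gives the bound for the Padé approximant. -/

open Complex ComplexConjugate

theorem norm_le_mul_pow_succ_div_of_norm_deriv_le {E : Type*} [NormedAddCommGroup E]
    [NormedSpace ℝ E] {f f' : ℝ → E} {C x : ℝ} (n : ℕ) (hf : ∀ t, HasDerivAt f (f' t) t)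
    (h0 : f 0 = 0) (bound : ∀ t, 0 ≤ t → ‖f' t‖ ≤ C * t ^ n) (hx : 0 ≤ x) :
    ‖f x‖ ≤ C * x ^ (n + 1) / (n + 1) := by
  have hB : ∀ t, HasDerivAt (fun t => C * t ^ (n + 1) / (n + 1)) (C * t ^ n) t := fun t =>
    (((hasDerivAt_pow (n + 1) t).const_mul C).div_const ((n : ℝ) + 1)).congr_deriv
      (by push_cast; field_simp)
  exact image_norm_le_of_norm_deriv_right_le_deriv_boundary (b := x)
    (fun t _ => (hf t).continuousAt.continuousWithinAt) (fun t _ => (hf t).hasDerivWithinAt)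
    (by simp [h0]) hB (fun t ht => bound t ht.1) ⟨hx, le_rfl⟩

noncomputable def crankNicolsonDefect (θ : ℝ) : ℂ :=
  (1 - I * θ / 2) * exp (I * θ) - (1 + I * θ / 2)

theorem hasDerivAt_exp_I_mul (t : ℝ) :
    HasDerivAt (fun s : ℝ => exp (I * s)) (I * exp (I * t)) t := by
  simpa [mul_comm] using ((hasDerivAt_id t).ofReal_comp.const_mul I).cexp

theorem hasDerivAt_I_mul_div_two (t : ℝ) :
    HasDerivAt (fun s : ℝ => I * s / 2) (I / 2) t := by
  simpa using ((hasDerivAt_id t).ofReal_comp.const_mul I).div_const 2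

theorem hasDerivAt_crankNicolsonDefect (t : ℝ) :
    HasDerivAt crankNicolsonDefect ((I + t) / 2 * exp (I * t) - I / 2) t :=
  ((((hasDerivAt_I_mul_div_two t).const_sub 1).mul (hasDerivAt_exp_I_mul t)).sub
    ((hasDerivAt_I_mul_div_two t).const_add 1)).congr_deriv
    (by linear_combination (-(t : ℂ) / 2 * exp (I * t)) * I_sq)

theorem hasDerivAt_deriv_crankNicolsonDefect (t : ℝ) :
    HasDerivAt (fun s : ℝ => (I + s) / 2 * exp (I * s) - I / 2) (I * t / 2 * exp (I * t)) t :=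
  (((((hasDerivAt_id t).ofReal_comp.const_add I).div_const 2).mul
    (hasDerivAt_exp_I_mul t)).sub_const (I / 2)).congr_deriv
    (by simp only [id, ofReal_one]; linear_combination (exp (I * t) / 2) * I_sq)

theorem crankNicolsonDefect_neg (θ : ℝ) :
    crankNicolsonDefect (-θ) = conj (crankNicolsonDefect θ) := by
  simp only [crankNicolsonDefect, map_sub, map_mul, map_add, map_div₀, map_one, map_ofNat,
    conj_I, conj_ofReal, ← exp_conj, ofReal_neg, neg_mul, mul_neg]

theorem one_le_norm_one_sub_I_mul_div_two (θ : ℝ) : 1 ≤ ‖1 - I * θ / 2‖ := by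
  simpa using abs_re_le_norm (1 - I * θ / 2)

theorem norm_deriv_crankNicolsonDefect_le {t : ℝ} (ht : 0 ≤ t) :
    ‖(I + t) / 2 * exp (I * t) - I / 2‖ ≤ 1 / 4 * t ^ 2 := by
  have h := norm_le_mul_pow_succ_div_of_norm_deriv_le (C := 1 / 2) 1
    hasDerivAt_deriv_crankNicolsonDefect (by simp) (fun s hs => by
      simp [norm_exp_I_mul_ofReal, abs_of_nonneg hs, div_eq_inv_mul]) ht
  norm_num at h
  linarith

theorem norm_crankNicolsonDefect_le_of_nonneg {θ : ℝ} (hθ : 0 ≤ θ) :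
    ‖crankNicolsonDefect θ‖ ≤ θ ^ 3 / 12 := by
  have h := norm_le_mul_pow_succ_div_of_norm_deriv_le 2 hasDerivAt_crankNicolsonDefect
    (by simp [crankNicolsonDefect]) (fun t ht => norm_deriv_crankNicolsonDefect_le ht) hθ
  norm_num at h
  linarith

theorem norm_crankNicolsonDefect_le (θ : ℝ) : ‖crankNicolsonDefect θ‖ ≤ |θ| ^ 3 / 12 := by
  rcases le_total 0 θ with hθ | hθ
  · simpa [abs_of_nonneg hθ] using norm_crankNicolsonDefect_le_of_nonneg hθ
  · simpa [crankNicolsonDefect_neg, abs_of_nonpos hθ] using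
      norm_crankNicolsonDefect_le_of_nonneg (neg_nonneg.mpr hθ)

/-- Scalar Padé estimate for the Crank–Nicolson symbol: for real `θ`,
`|(1 − iθ/2)e^{iθ} − (1 + iθ/2)| ≤ |θ|³/12`, hence
`|e^{iθ} − (1 + iθ/2)/(1 − iθ/2)| ≤ |θ|³/12`. -/
theorem stmt12 (θ : ℝ) :
    ‖(1 - Complex.I * (θ : ℂ) / 2) * Complex.exp (Complex.I * (θ : ℂ))
        - (1 + Complex.I * (θ : ℂ) / 2)‖ ≤ |θ| ^ 3 / 12 ∧
      ‖Complex.exp (Complex.I * (θ : ℂ))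
          - (1 + Complex.I * (θ : ℂ) / 2) / (1 - Complex.I * (θ : ℂ) / 2)‖ ≤
        |θ| ^ 3 / 12 := by
  have hden := one_le_norm_one_sub_I_mul_div_two θ
  have hne : 1 - I * θ / 2 ≠ 0 := norm_pos_iff.mp (one_pos.trans_le hden)
  have hratio : exp (I * θ) - (1 + I * θ / 2) / (1 - I * θ / 2)
      = crankNicolsonDefect θ / (1 - I * θ / 2) := by
    rw [crankNicolsonDefect, eq_div_iff hne, sub_mul, div_mul_cancel₀ _ hne]
    ring
  refine ⟨norm_crankNicolsonDefect_le θ, ?_⟩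
  rw [hratio, norm_div]
  exact (div_le_self (norm_nonneg _) hden).trans (norm_crankNicolsonDefect_le θ)
end

section
/- For every τ ≥ 0 and every ξ ∈ ℝ: |e^{iτξ²} − (1 + iτξ²/2)/(1 − iτξ²/2)| ≤ τ²·ξ⁴. -/
open Complex

/-! Multiplying the difference by `1 - iθ/2`, which has modulus at least `1`, turns it into
`(e^{iθ} - 1 - iθ) - (iθ/2)(e^{iθ} - 1)`; the two Taylor remainders are at most `θ²/2` and
`|θ|/2 · |θ|`. -/

theorem norm_exp_I_mul_ofReal_sub_one_sub_le_of_nonneg {x : ℝ} (hx : 0 ≤ x) :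
    ‖exp (I * x) - 1 - I * x‖ ≤ x ^ 2 / 2 := by
  have hf (s : ℝ) :
      HasDerivAt (fun s : ℝ ↦ exp (I * s) - 1 - I * s) (I * (exp (I * s) - 1)) s := by
    have h : HasDerivAt (fun s : ℝ ↦ I * s) I s := by
      simpa using ((hasDerivAt_id (s : ℂ)).const_mul I).comp_ofReal
    rw [mul_sub, mul_one, mul_comm]
    exact (h.cexp.sub_const 1).sub h
  have hB (s : ℝ) : HasDerivAt (fun s : ℝ ↦ s ^ 2 / 2) s s := by
    simpa using (hasDerivAt_pow 2 s).div_const 2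
  refine image_norm_le_of_norm_deriv_right_le_deriv_boundary (a := 0) (b := x)
    (fun s _ ↦ (hf s).continuousAt.continuousWithinAt) (fun s _ ↦ (hf s).hasDerivWithinAt)
    (by simp) hB (fun s hs ↦ ?_) ⟨hx, le_rfl⟩
  calc ‖I * (exp (I * s) - 1)‖ = ‖exp (I * s) - 1‖ := by rw [norm_mul, norm_I, one_mul]
    _ ≤ ‖s‖ := Real.norm_exp_I_mul_ofReal_sub_one_le
    _ = s := Real.norm_of_nonneg hs.1

theorem norm_exp_I_mul_ofReal_sub_one_sub_le (x : ℝ) :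
    ‖exp (I * x) - 1 - I * x‖ ≤ x ^ 2 / 2 := by
  rcases le_total 0 x with hx | hx
  · exact norm_exp_I_mul_ofReal_sub_one_sub_le_of_nonneg hx
  · have h := norm_exp_I_mul_ofReal_sub_one_sub_le_of_nonneg (neg_nonneg.mpr hx)
    rw [neg_sq, ← norm_conj] at h
    convert h using 2
    simp [← exp_conj, sub_eq_add_neg]

theorem norm_exp_I_mul_ofReal_sub_crankNicolson_le (θ : ℝ) :
    ‖exp (I * θ) - (1 + I * θ / 2) / (1 - I * θ / 2)‖ ≤ θ ^ 2 := by
  set d : ℂ := 1 - I * θ / 2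
  have hd : 1 ≤ ‖d‖ := by simpa [d] using abs_re_le_norm d
  have hd0 : d ≠ 0 := norm_pos_iff.mp (one_pos.trans_le hd)
  have key : (exp (I * θ) - (1 + I * θ / 2) / d) * d
      = (exp (I * θ) - 1 - I * θ) - I * θ / 2 * (exp (I * θ) - 1) := by
    field_simp
    ring
  calc ‖exp (I * θ) - (1 + I * θ / 2) / d‖
      ≤ ‖exp (I * θ) - (1 + I * θ / 2) / d‖ * ‖d‖ := le_mul_of_one_le_right (norm_nonneg _) hd
    _ ≤ θ ^ 2 / 2 + |θ| / 2 * |θ| := by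
      rw [← norm_mul, key]
      refine (norm_sub_le _ _).trans (add_le_add (norm_exp_I_mul_ofReal_sub_one_sub_le θ) ?_)
      rw [norm_mul]
      gcongr
      · simp
      · exact Real.norm_exp_I_mul_ofReal_sub_one_le
    _ = θ ^ 2 := by rw [div_mul_eq_mul_div, abs_mul_abs_self]; ring

theorem stmt13_general (τ : ℝ) (ξ : ℝ) :
    ‖Complex.exp (Complex.I * ((τ * ξ ^ 2 : ℝ) : ℂ))
        - (1 + Complex.I * ((τ * ξ ^ 2 : ℝ) : ℂ) / 2)
          / (1 - Complex.I * ((τ * ξ ^ 2 : ℝ) : ℂ) / 2)‖ ≤ τ ^ 2 * ξ ^ 4 := by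
  have h := norm_exp_I_mul_ofReal_sub_crankNicolson_le (τ * ξ ^ 2)
  rwa [mul_pow, ← pow_mul] at h

/-- Crank–Nicolson multiplier estimate at frequency `ξ`:
`|e^{iτξ²} − (1 + iτξ²/2)/(1 − iτξ²/2)| ≤ τ²ξ⁴` for `τ ≥ 0`. -/
theorem stmt13 (τ : ℝ) (hτ : 0 ≤ τ) (ξ : ℝ) :
    ‖Complex.exp (Complex.I * ((τ * ξ ^ 2 : ℝ) : ℂ))
        - (1 + Complex.I * ((τ * ξ ^ 2 : ℝ) : ℂ) / 2)
          / (1 - Complex.I * ((τ * ξ ^ 2 : ℝ) : ℂ) / 2)‖ ≤ τ ^ 2 * ξ ^ 4 :=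
  stmt13_general τ ξ
end
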